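/- If ω is trivial, i.e. h·(l·1_A) = ω(h,l) = Σ(h₍₁₎·1_A)(h₍₂₎l·1_A), then in A #_{(α,ω)} H one has (a # h)(b # l) = Σ a(h₍₁₎·(b(l₍₁₎·1_A))) # h₍₂₎l₍₂₎, recovering the partial smash product. -/

import Mathlib

/-!
Linear maps `H → A ⊗ H` form an associative algebra under convolution, associativity being
coassociativity of `Δ`. In it, the axiom `act_mul` says that `h ↦ (h · c) ⊗ 1` is multiplicative
in `c`, and triviality of `ω` says that `h ↦ ω(h, l) ⊗ 1` is the convolution of `h ↦ (h · 1) ⊗ 1`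
with `h ↦ (h l · 1) ⊗ 1`. Against a pure tensor `c ⊗ y`, both `(a # h)(c ⊗ y)` and
`Σ a(h₁ · c) # h₂ y` are `(a ⊗ 1)` times a convolution product evaluated at `h`, and these two
facts turn the first product into the second.
-/

open TensorProduct

noncomputable section

/-- A twisted partial action `(α, ω)` of a Hopf algebra `H` on a unital
algebra `A` (Definition 2.1 of Alves–Batista–Dokuchaev–Paques).  Sweedler sums
are expressed by quantifying over arbitrary finite representations of the
comultiplication. -/
structure TwistedPartialAction (k H A : Type) [CommRing k]
    [Ring H] [HopfAlgebra k H] [Ring A] [Algebra k A] where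
  act : H →ₗ[k] A →ₗ[k] A
  cocycle : H →ₗ[k] H →ₗ[k] A
  /-- `1_H · a = a` -/
  act_one : ∀ a : A, act 1 a = a
  /-- `h · (ab) = Σ (h₁ · a)(h₂ · b)` -/
  act_mul : ∀ (h : H) (a b : A) (ι : Type) (s : Finset ι) (h1 h2 : ι → H),
    Coalgebra.comul (R := k) h = ∑ i ∈ s, h1 i ⊗ₜ[k] h2 i →
    act h (a * b) = ∑ i ∈ s, act (h1 i) a * act (h2 i) b
  /-- `Σ (h₁ · (l₁ · a)) ω(h₂, l₂) = Σ ω(h₁, l₁)(h₂ l₂ · a)` -/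
  twisted : ∀ (h l : H) (a : A) (ι κ : Type) (s : Finset ι) (t : Finset κ)
    (h1 h2 : ι → H) (l1 l2 : κ → H),
    Coalgebra.comul (R := k) h = ∑ i ∈ s, h1 i ⊗ₜ[k] h2 i →
    Coalgebra.comul (R := k) l = ∑ j ∈ t, l1 j ⊗ₜ[k] l2 j →
    ∑ i ∈ s, ∑ j ∈ t, act (h1 i) (act (l1 j) a) * cocycle (h2 i) (l2 j) =
      ∑ i ∈ s, ∑ j ∈ t, cocycle (h1 i) (l1 j) * act (h2 i * l2 j) a
  /-- `ω(h,l) = Σ ω(h₁, l₁)(h₂ l₂ · 1)` -/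
  cocycle_absorb : ∀ (h l : H) (ι κ : Type) (s : Finset ι) (t : Finset κ)
    (h1 h2 : ι → H) (l1 l2 : κ → H),
    Coalgebra.comul (R := k) h = ∑ i ∈ s, h1 i ⊗ₜ[k] h2 i →
    Coalgebra.comul (R := k) l = ∑ j ∈ t, l1 j ⊗ₜ[k] l2 j →
    cocycle h l = ∑ i ∈ s, ∑ j ∈ t, cocycle (h1 i) (l1 j) * act (h2 i * l2 j) 1

/-- The element `a # h = Σ a(h₁ · 1_A) ⊗ h₂` of `A ⊗ H`. -/
def sharp {k H A : Type} [CommRing k] [Ring H] [HopfAlgebra k H]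
    [Ring A] [Algebra k A] (act : H →ₗ[k] A →ₗ[k] A) (a : A) (h : H) :
    A ⊗[k] H :=
  (TensorProduct.map ((LinearMap.mulLeft k a) ∘ₗ (LinearMap.flip act) 1)
    LinearMap.id) (Coalgebra.comul (R := k) h)

/-- The partial crossed product `A #_{(α,ω)} H`, as a submodule of `A ⊗ H`:
the span of the elements `a # h`. -/
def crossedSpan {k H A : Type} [CommRing k] [Ring H] [HopfAlgebra k H]
    [Ring A] [Algebra k A] (act : H →ₗ[k] A →ₗ[k] A) :
    Submodule k (A ⊗[k] H) :=
  Submodule.span k {x : A ⊗[k] H | ∃ a h, sharp act a h = x}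

/-- `μ` is the multiplication `(a ⊗ h)(b ⊗ l) = Σ a(h₁·b)ω(h₂,l₁) ⊗ h₃l₂`
on `A ⊗ H`. -/
def IsCrossedMul {k H A : Type} [CommRing k] [Ring H] [HopfAlgebra k H]
    [Ring A] [Algebra k A] (act : H →ₗ[k] A →ₗ[k] A)
    (cocycle : H →ₗ[k] H →ₗ[k] A)
    (μ : A ⊗[k] H →ₗ[k] A ⊗[k] H →ₗ[k] A ⊗[k] H) : Prop :=
  ∀ (a b : A) (h l : H) (ι ι' κ : Type) (s : Finset ι) (s' : ι → Finset ι')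
    (t : Finset κ) (h1 h2 : ι → H) (h21 h22 : ι → ι' → H) (l1 l2 : κ → H),
    Coalgebra.comul (R := k) h = ∑ i ∈ s, h1 i ⊗ₜ[k] h2 i →
    (∀ i ∈ s, Coalgebra.comul (R := k) (h2 i) =
      ∑ j ∈ s' i, h21 i j ⊗ₜ[k] h22 i j) →
    Coalgebra.comul (R := k) l = ∑ p ∈ t, l1 p ⊗ₜ[k] l2 p →
    μ (a ⊗ₜ[k] h) (b ⊗ₜ[k] l) =
      ∑ i ∈ s, ∑ j ∈ s' i, ∑ p ∈ t,
        (a * act (h1 i) b * cocycle (h21 i j) (l1 p)) ⊗ₜ[k] (h22 i j * l2 p)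

open Coalgebra WithConv

section Convolution

variable {k H A : Type} [CommRing k] [Ring H] [HopfAlgebra k H] [Ring A] [Algebra k A]

def leftConv (f : H →ₗ[k] A) : WithConv (H →ₗ[k] A ⊗[k] H) :=
  toConv (Algebra.TensorProduct.includeLeft.toLinearMap ∘ₗ f)

def rightConv (y : H) : WithConv (H →ₗ[k] A ⊗[k] H) :=
  toConv (Algebra.TensorProduct.includeRight.toLinearMap ∘ₗ LinearMap.mulRight k y)

lemma leftConv_apply (f : H →ₗ[k] A) (g : H) : leftConv f g = f g ⊗ₜ[k] (1 : H) := rfl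

lemma rightConv_apply (y g : H) : rightConv (A := A) y g = (1 : A) ⊗ₜ[k] (g * y) := rfl

lemma leftConv_mul (f g : H →ₗ[k] A) :
    leftConv f * leftConv g = leftConv (toConv f * toConv g).ofConv :=
  (toConv_injective.eq_iff.mpr
    (LinearMap.algHom_comp_convMul_distrib _ (toConv f) (toConv g))).symm

/-- `g ↦ Σ ω(g₁, y₁) ⊗ g₂ y₂`, computed from a representation `ρ` of `Δ y`. -/
def twistConv (ω : H →ₗ[k] H →ₗ[k] A) {y : H} {κ : Type} (ρ : Repr k y κ) :
    WithConv (H →ₗ[k] A ⊗[k] H) :=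
  ∑ u ∈ ρ.index, leftConv (ω.flip (ρ.left u)) * rightConv (ρ.right u)

lemma twistConv_apply (ω : H →ₗ[k] H →ₗ[k] A) {y : H} {κ : Type} (ρ : Repr k y κ)
    {g : H} {ι : Type} (ρg : Repr k g ι) :
    twistConv ω ρ g = ∑ i ∈ ρg.index, ∑ u ∈ ρ.index,
      ω (ρg.left i) (ρ.left u) ⊗ₜ[k] (ρg.right i * ρ.right u) := by
  simp only [twistConv, ofConv_sum, LinearMap.coe_sum, Finset.sum_apply, ρg.convMul_apply,
    leftConv_apply, LinearMap.flip_apply, rightConv_apply, Algebra.TensorProduct.tmul_mul_tmul,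
    mul_one, one_mul]
  exact Finset.sum_comm

lemma convMul_apply_tmul_one (a : A) (f : H →ₗ[k] A) (F : WithConv (H →ₗ[k] A ⊗[k] H))
    {h : H} {ι : Type} (ρ : Repr k h ι) :
    (a ⊗ₜ[k] (1 : H)) * (leftConv f * F) h =
      ∑ i ∈ ρ.index, ((a * f (ρ.left i)) ⊗ₜ[k] (1 : H)) * F (ρ.right i) := by
  simp [ρ.convMul_apply, leftConv_apply, Finset.mul_sum, ← mul_assoc]

def mulActOne (act : H →ₗ[k] A →ₗ[k] A) : H →ₗ[k] H →ₗ[k] A :=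
  (LinearMap.mul k H).compr₂ (act.flip 1)

lemma sharp_eq_sum (act : H →ₗ[k] A →ₗ[k] A) (a : A) {h : H} {ι : Type} (ρ : Repr k h ι) :
    sharp act a h = ∑ i ∈ ρ.index, (a * act (ρ.left i) 1) ⊗ₜ[k] ρ.right i := by
  simp [sharp, ← ρ.eq]

lemma sharp_mul_eq (act : H →ₗ[k] A →ₗ[k] A) (a : A) (g : H) {y : H} {κ : Type}
    (ρ : Repr k y κ) :
    sharp act a (g * y) = (a ⊗ₜ[k] (1 : H)) * twistConv (mulActOne act) ρ g := by
  rw [sharp_eq_sum act a ((ℛ k g).mul ρ), twistConv_apply _ ρ (ℛ k g), Repr.mul_index,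
    Finset.sum_product]
  simp [mulActOne, Finset.mul_sum]

lemma IsCrossedMul.apply_tmul_tmul {act : H →ₗ[k] A →ₗ[k] A} {cocycle : H →ₗ[k] H →ₗ[k] A}
    {μ : A ⊗[k] H →ₗ[k] A ⊗[k] H →ₗ[k] A ⊗[k] H} (hμ : IsCrossedMul act cocycle μ)
    (x c : A) (g : H) {y : H} {κ : Type} (ρ : Repr k y κ) :
    μ (x ⊗ₜ[k] g) (c ⊗ₜ[k] y) =
      (x ⊗ₜ[k] (1 : H)) * (leftConv (act.flip c) * twistConv cocycle ρ) g := by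
  let ρg := ℛ k g
  rw [hμ x c g y _ _ _ ρg.index (fun i => (ℛ k (ρg.right i)).index) ρ.index ρg.left ρg.right
    (fun i => (ℛ k (ρg.right i)).left) (fun i => (ℛ k (ρg.right i)).right) ρ.left ρ.right
    ρg.eq.symm (fun i _ => (ℛ k (ρg.right i)).eq.symm) ρ.eq.symm,
    convMul_apply_tmul_one x _ _ ρg]
  simp [twistConv_apply cocycle ρ (ℛ k _), Finset.mul_sum]

end Convolution

namespace TwistedPartialAction

variable {k H A : Type} [CommRing k] [Ring H] [HopfAlgebra k H] [Ring A] [Algebra k A]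
  (P : TwistedPartialAction k H A)

lemma act_flip_convMul (c d : A) :
    toConv (P.act.flip c) * toConv (P.act.flip d) = toConv (P.act.flip (c * d)) := by
  ext h
  rw [(ℛ k h).convMul_apply]
  exact (P.act_mul h c d _ _ _ _ (ℛ k h).eq.symm).symm

variable {P}

lemma cocycle_flip_eq_convMul
    (hω : ∀ (h l : H) (ι : Type) (s : Finset ι) (h1 h2 : ι → H),
      Coalgebra.comul (R := k) h = ∑ i ∈ s, h1 i ⊗ₜ[k] h2 i →
      P.cocycle h l = ∑ i ∈ s, P.act (h1 i) 1 * P.act (h2 i * l) 1)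
    (l : H) :
    toConv (P.cocycle.flip l) = toConv (P.act.flip 1) * toConv ((mulActOne P.act).flip l) := by
  ext h
  rw [(ℛ k h).convMul_apply]
  exact hω h l _ _ _ _ (ℛ k h).eq.symm

lemma leftConv_act_mul_twistConv
    (hω : ∀ l : H,
      toConv (P.cocycle.flip l) = toConv (P.act.flip 1) * toConv ((mulActOne P.act).flip l))
    (c : A) {y : H} {κ : Type} (ρ : Repr k y κ) :
    leftConv (P.act.flip c) * twistConv P.cocycle ρ =
      leftConv (P.act.flip c) * twistConv (mulActOne P.act) ρ := by
  simp only [twistConv, Finset.mul_sum, ← mul_assoc, leftConv_mul, hω, P.act_flip_convMul,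
    mul_one]

lemma crossedMul_sharp_tmul
    (hω : ∀ l : H,
      toConv (P.cocycle.flip l) = toConv (P.act.flip 1) * toConv ((mulActOne P.act).flip l))
    {μ : A ⊗[k] H →ₗ[k] A ⊗[k] H →ₗ[k] A ⊗[k] H} (hμ : IsCrossedMul P.act P.cocycle μ)
    (a c : A) {h : H} {ι : Type} (ρ : Repr k h ι) (y : H) :
    μ (sharp P.act a h) (c ⊗ₜ[k] y) =
      ∑ i ∈ ρ.index, sharp P.act (a * P.act (ρ.left i) c) (ρ.right i * y) := by
  let ρy := ℛ k y
  calc μ (sharp P.act a h) (c ⊗ₜ[k] y)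
      = ∑ i ∈ ρ.index, ((a * P.act.flip 1 (ρ.left i)) ⊗ₜ[k] (1 : H)) *
          (leftConv (P.act.flip c) * twistConv P.cocycle ρy) (ρ.right i) := by
        simp only [sharp_eq_sum _ _ ρ, map_sum, LinearMap.sum_apply, hμ.apply_tmul_tmul _ _ _ ρy,
          LinearMap.flip_apply]
    _ = (a ⊗ₜ[k] (1 : H)) *
          (leftConv (P.act.flip 1) * (leftConv (P.act.flip c) * twistConv P.cocycle ρy)) h :=
        (convMul_apply_tmul_one _ _ _ ρ).symm
    _ = (a ⊗ₜ[k] (1 : H)) *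
          (leftConv (P.act.flip c) * twistConv (mulActOne P.act) ρy) h := by
        rw [← mul_assoc, leftConv_mul, P.act_flip_convMul, ofConv_toConv, one_mul,
          leftConv_act_mul_twistConv hω]
    _ = ∑ i ∈ ρ.index, ((a * P.act.flip c (ρ.left i)) ⊗ₜ[k] (1 : H)) *
          twistConv (mulActOne P.act) ρy (ρ.right i) :=
        convMul_apply_tmul_one _ _ _ ρ
    _ = ∑ i ∈ ρ.index, sharp P.act (a * P.act (ρ.left i) c) (ρ.right i * y) := by
        simp only [sharp_mul_eq _ _ _ ρy, LinearMap.flip_apply]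

end TwistedPartialAction

theorem trivialCocycle_smash_general
    {k H A : Type} [CommRing k] [Ring H] [HopfAlgebra k H]
    [Ring A] [Algebra k A] (P : TwistedPartialAction k H A)
    (htriv2 : ∀ (h l : H) (ι : Type) (s : Finset ι) (h1 h2 : ι → H),
      Coalgebra.comul (R := k) h = ∑ i ∈ s, h1 i ⊗ₜ[k] h2 i →
      P.cocycle h l = ∑ i ∈ s, P.act (h1 i) 1 * P.act (h2 i * l) 1)
    (μ : A ⊗[k] H →ₗ[k] A ⊗[k] H →ₗ[k] A ⊗[k] H)
    (hμ : IsCrossedMul P.act P.cocycle μ) :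
    ∀ (a b : A) (h l : H) (ι κ : Type) (s : Finset ι) (t : Finset κ)
      (h1 h2 : ι → H) (l1 l2 : κ → H),
      Coalgebra.comul (R := k) h = ∑ i ∈ s, h1 i ⊗ₜ[k] h2 i →
      Coalgebra.comul (R := k) l = ∑ j ∈ t, l1 j ⊗ₜ[k] l2 j →
      μ (sharp P.act a h) (sharp P.act b l) =
        ∑ i ∈ s, ∑ j ∈ t,
          sharp P.act (a * P.act (h1 i) (b * P.act (l1 j) 1))
            (h2 i * l2 j) := by
  intro a b h l ι κ s t h1 h2 l1 l2 hh hl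
  rw [sharp_eq_sum P.act b (⟨t, l1, l2, hl.symm⟩ : Repr k l κ), map_sum, Finset.sum_comm]
  exact Finset.sum_congr rfl fun j _ =>
    TwistedPartialAction.crossedMul_sharp_tmul
      (TwistedPartialAction.cocycle_flip_eq_convMul htriv2) hμ a _ ⟨s, h1, h2, hh.symm⟩ (l2 j)

/-- When the cocycle `ω` is trivial, the multiplication of the partial
crossed product reduces to the partial smash product of Caenepeel–Janssen:
`(a # h)(b # l) = Σ a(h₁·(b(l₁·1))) # h₂l₂`. -/
theorem trivialCocycle_smash
    {k H A : Type} [CommRing k] [Ring H] [HopfAlgebra k H]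
    [Ring A] [Algebra k A] (P : TwistedPartialAction k H A)
    (htriv1 : ∀ h l : H, P.act h (P.act l 1) = P.cocycle h l)
    (htriv2 : ∀ (h l : H) (ι : Type) (s : Finset ι) (h1 h2 : ι → H),
      Coalgebra.comul (R := k) h = ∑ i ∈ s, h1 i ⊗ₜ[k] h2 i →
      P.cocycle h l = ∑ i ∈ s, P.act (h1 i) 1 * P.act (h2 i * l) 1)
    (μ : A ⊗[k] H →ₗ[k] A ⊗[k] H →ₗ[k] A ⊗[k] H)
    (hμ : IsCrossedMul P.act P.cocycle μ) :
    ∀ (a b : A) (h l : H) (ι κ : Type) (s : Finset ι) (t : Finset κ)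
      (h1 h2 : ι → H) (l1 l2 : κ → H),
      Coalgebra.comul (R := k) h = ∑ i ∈ s, h1 i ⊗ₜ[k] h2 i →
      Coalgebra.comul (R := k) l = ∑ j ∈ t, l1 j ⊗ₜ[k] l2 j →
      μ (sharp P.act a h) (sharp P.act b l) =
        ∑ i ∈ s, ∑ j ∈ t,
          sharp P.act (a * P.act (h1 i) (b * P.act (l1 j) 1))
            (h2 i * l2 j) :=
  trivialCocycle_smash_general P htriv2 μ hμ
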